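/- For K = 2, the closed eBH procedure coincides with the minimally adaptive eBH procedure: for any e-values E_1, E_2 ≥ 0 and α ∈ (0,1], the largest prefix R_k in C̄ equals R^{eBHm}. -/
import Mathlib


open Finset
open scoped Classical

/-- The false discovery proportion `FDP_A(R) = |A ∩ R| / max(|R|, 1)`. -/
noncomputable def FDP {K : ℕ} (A R : Finset (Fin K)) : ℝ :=
  ((A ∩ R).card : ℝ) / max (R.card : ℝ) 1

/-- `R_k`: the `k` largest e-values for `K = 2`, with `E 0 ≥ E 1` (prefix of indices). -/
noncomputable def Rk (k : ℕ) : Finset (Fin 2) :=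
  univ.filter (fun i : Fin 2 => (i : ℕ) < k)

/-- Membership in the closed candidate set `C̄`. -/
def Cbar (α : ℝ) (E : Fin 2 → ℝ) (R : Finset (Fin 2)) : Prop :=
  ∀ A : Finset (Fin 2), A.Nonempty → (∑ i ∈ A, E i) / (A.card : ℝ) ≥ FDP A R / α

/-- `k̄`: the largest `k ≤ 2` with `R_k ∈ C̄`. -/
noncomputable def kCbar (α : ℝ) (E : Fin 2 → ℝ) : ℕ :=
  sSup {k | k ≤ 2 ∧ Cbar α E (Rk k)}

/-- `k^{eBHm}` for `K = 2`: the largest `k ∈ {1,2}` with `(E 0 + E 1)/2 ≥ 1/α` and at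
least `k` e-values `≥ (2−1)/(αk) = 1/(αk)` (`0` if no such `k`). -/
noncomputable def kEBHm (α : ℝ) (E : Fin 2 → ℝ) : ℕ :=
  sSup {k | 1 ≤ k ∧ k ≤ 2 ∧ (E 0 + E 1) / 2 ≥ 1 / α ∧
    k ≤ (univ.filter (fun i : Fin 2 => E i ≥ 1 / (α * k))).card}

lemma A_cases (A : Finset (Fin 2)) (hA : A.Nonempty) : A = {0} ∨ A = {1} ∨ A = {0,1} := by
  fin_cases A <;> first | (left; rfl) | (right; left; rfl) | (right; right; rfl) | simp_all

lemma Rk0 : Rk 0 = ∅ := by ext i; fin_cases i <;> simp [Rk]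
lemma Rk1 : Rk 1 = {0} := by ext i; fin_cases i <;> simp [Rk]
lemma Rk2 : Rk 2 = {0,1} := by ext i; fin_cases i <;> simp [Rk]

lemma sum_pair' (E : Fin 2 → ℝ) : ∑ i ∈ ({0,1} : Finset (Fin 2)), E i = E 0 + E 1 := by
  rw [Finset.sum_pair (by decide)]

lemma cbar0 (α : ℝ) (E : Fin 2 → ℝ) (hE : ∀ i, 0 ≤ E i) : Cbar α E (Rk 0) := by
  intro A hA
  rw [Rk0]
  simp only [FDP, Finset.inter_empty, Finset.card_empty, Nat.cast_zero, zero_div, ge_iff_le]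
  exact div_nonneg (Finset.sum_nonneg fun i _ => hE i) (Nat.cast_nonneg _)

lemma cbar1 (α : ℝ) (hα : 0 < α) (E : Fin 2 → ℝ) (hE : ∀ i, 0 ≤ E i) (hsort : E 1 ≤ E 0) :
    Cbar α E (Rk 1) ↔ 1/α ≤ (E 0 + E 1)/2 := by
  constructor
  · intro h
    have hb := h {0,1} (by simp)
    rw [sum_pair'] at hb
    simp only [FDP, Rk1, ge_iff_le] at hb
    rw [show ({0,1} : Finset (Fin 2)) ∩ {0} = {0} from rfl] at hb
    norm_num at hb
    rw [one_div]
    exact hb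
  · intro h A hA
    have hmean : 1/α ≤ E 0 := le_trans h (by linarith)
    rcases A_cases A hA with rfl | rfl | rfl
    · simp only [FDP, Rk1, Finset.inter_self, ge_iff_le]
      norm_num
      rw [one_div] at hmean; exact hmean
    · simp only [FDP, Rk1, ge_iff_le]
      rw [show ({1} : Finset (Fin 2)) ∩ {0} = ∅ from rfl]
      norm_num
      exact hE 1
    · rw [sum_pair']
      simp only [FDP, Rk1, ge_iff_le]
      rw [show ({0,1} : Finset (Fin 2)) ∩ {0} = {0} from rfl]
      norm_num
      rw [one_div] at h; exact h

lemma cbar2 (α : ℝ) (hα : 0 < α) (E : Fin 2 → ℝ) (hE : ∀ i, 0 ≤ E i) (hsort : E 1 ≤ E 0) :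
    Cbar α E (Rk 2) ↔ (1/(2*α) ≤ E 1 ∧ 1/α ≤ (E 0 + E 1)/2) := by
  constructor
  · intro h
    have h1 := h {1} (by simp)
    have hb := h {0,1} (by simp)
    rw [sum_pair'] at hb
    simp only [FDP, Rk2, ge_iff_le] at h1 hb
    rw [show ({1} : Finset (Fin 2)) ∩ {0,1} = {1} from rfl] at h1
    rw [Finset.inter_self] at hb
    norm_num at h1 hb
    refine ⟨?_, ?_⟩
    · calc 1/(2*α) = 1/2/α := by ring
      _ ≤ E 1 := h1
    · rw [one_div]; exact hb
  · rintro ⟨he1, hm⟩ A hA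
    have he0 : 1/(2*α) ≤ E 0 := le_trans he1 hsort
    rcases A_cases A hA with rfl | rfl | rfl
    · simp only [FDP, Rk2, ge_iff_le]
      rw [show ({0} : Finset (Fin 2)) ∩ {0,1} = {0} from rfl]
      norm_num
      calc (1:ℝ)/2/α = 1/(2*α) := by ring
      _ ≤ E 0 := he0
    · simp only [FDP, Rk2, ge_iff_le]
      rw [show ({1} : Finset (Fin 2)) ∩ {0,1} = {1} from rfl]
      norm_num
      calc (1:ℝ)/2/α = 1/(2*α) := by ring
      _ ≤ E 1 := he1
    · rw [sum_pair']
      simp only [FDP, Rk2, Finset.inter_self, ge_iff_le]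
      norm_num
      rw [one_div] at hm; exact hm

lemma filt1 (α : ℝ) (hα : 0 < α) (E : Fin 2 → ℝ) (hsort : E 1 ≤ E 0) :
    (1 ≤ (univ.filter (fun i : Fin 2 => E i ≥ 1 / (α * ((1:ℕ):ℝ)))).card) ↔ 1/α ≤ E 0 := by
  rw [Finset.one_le_card]
  constructor
  · rintro ⟨i, hi⟩
    simp only [Finset.mem_filter, ge_iff_le] at hi
    norm_num at hi
    rw [one_div]
    fin_cases i
    · exact hi
    · exact le_trans hi hsort
  · intro h
    rw [one_div] at h
    refine ⟨0, ?_⟩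
    simp only [Finset.mem_filter, Finset.mem_univ, true_and, ge_iff_le]
    norm_num
    exact h

lemma filt2 (α : ℝ) (hα : 0 < α) (E : Fin 2 → ℝ) (hsort : E 1 ≤ E 0) :
    (2 ≤ (univ.filter (fun i : Fin 2 => E i ≥ 1 / (α * ((2:ℕ):ℝ)))).card) ↔ 1/(2*α) ≤ E 1 := by
  constructor
  · intro h
    have hsub : (univ.filter (fun i : Fin 2 => E i ≥ 1 / (α * ((2:ℕ):ℝ)))) = univ := by
      apply Finset.eq_univ_of_card
      have := Finset.card_filter_le (univ : Finset (Fin 2)) (fun i : Fin 2 => E i ≥ 1 / (α * ((2:ℕ):ℝ)))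
      simp only [Finset.card_univ, Fintype.card_fin] at this ⊢
      omega
    have h1 : (1 : Fin 2) ∈ univ.filter (fun i : Fin 2 => E i ≥ 1 / (α * ((2:ℕ):ℝ))) := by
      rw [hsub]; exact Finset.mem_univ _
    simp only [Finset.mem_filter, ge_iff_le] at h1
    calc 1/(2*α) = 1/(α*((2:ℕ):ℝ)) := by push_cast; ring
    _ ≤ E 1 := h1.2
  · intro h
    have hu : (univ.filter (fun i : Fin 2 => E i ≥ 1 / (α * ((2:ℕ):ℝ)))) = univ := by
      ext i
      simp only [Finset.mem_filter, Finset.mem_univ, true_and, iff_true, ge_iff_le]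
      have hth : 1/(α*((2:ℕ):ℝ)) = 1/(2*α) := by push_cast; ring
      rw [hth]
      fin_cases i
      · exact le_trans h hsort
      · exact h
    rw [hu]
    simp

/-- for `K = 2`, the closed eBH procedure coincides with the minimally
adaptive eBH procedure. -/
theorem stmt19 (α : ℝ) (hα : 0 < α) (hα1 : α ≤ 1)
    (E : Fin 2 → ℝ) (hE : ∀ i, 0 ≤ E i) (hsort : E 1 ≤ E 0) :
    Rk (kCbar α E) = Rk (kEBHm α E) := by
  have hE0mean : (E 0 + E 1)/2 ≤ E 0 := by linarith
  by_cases hcase2 : 1/(2*α) ≤ E 1 ∧ 1/α ≤ (E 0 + E 1)/2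
  · have hC : kCbar α E = 2 := by
      apply IsGreatest.csSup_eq
      exact ⟨⟨le_refl 2, (cbar2 α hα E hE hsort).mpr hcase2⟩, fun k hk => hk.1⟩
    have hH : kEBHm α E = 2 := by
      apply IsGreatest.csSup_eq
      refine ⟨⟨by norm_num, le_refl 2, hcase2.2, (filt2 α hα E hsort).mpr hcase2.1⟩,
        fun k hk => hk.2.1⟩
    rw [hC, hH]
  · by_cases hcase1 : 1/α ≤ (E 0 + E 1)/2
    · have hne1 : ¬ (1/(2*α) ≤ E 1) := fun h => hcase2 ⟨h, hcase1⟩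
      have hC : kCbar α E = 1 := by
        apply IsGreatest.csSup_eq
        refine ⟨⟨by norm_num, (cbar1 α hα E hE hsort).mpr hcase1⟩, fun k hk => ?_⟩
        obtain ⟨hkle, hkc⟩ := hk
        by_contra hk1
        have : k = 2 := by omega
        subst this
        exact hne1 ((cbar2 α hα E hE hsort).mp hkc).1
      have hH : kEBHm α E = 1 := by
        apply IsGreatest.csSup_eq
        refine ⟨⟨le_refl 1, by norm_num, hcase1,
          (filt1 α hα E hsort).mpr (le_trans hcase1 hE0mean)⟩, fun k hk => ?_⟩
        obtain ⟨hk1', hkle, hkm, hkf⟩ := hk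
        by_contra hk1
        have : k = 2 := by omega
        subst this
        exact hne1 ((filt2 α hα E hsort).mp hkf)
      rw [hC, hH]
    · have hC : kCbar α E = 0 := by
        apply IsGreatest.csSup_eq
        refine ⟨⟨by norm_num, cbar0 α E hE⟩, fun k hk => ?_⟩
        obtain ⟨hkle, hkc⟩ := hk
        by_contra hk1
        have h1k : 1 ≤ k := by omega
        interval_cases k
        · exact hcase1 ((cbar1 α hα E hE hsort).mp hkc)
        · exact hcase1 ((cbar2 α hα E hE hsort).mp hkc).2
      have hH : kEBHm α E = 0 := by
        rw [kEBHm]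
        have hemp : sSup (∅ : Set ℕ) = 0 := csSup_empty
        rw [← hemp]
        congr 1
        ext k
        simp only [Set.mem_setOf_eq, Set.mem_empty_iff_false, iff_false, not_and]
        intro _ _
        exact fun h => absurd h hcase1
      rw [hC, hH]
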